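/- Key monotonicity-type inequality: let e(Z) = ⟪EZ, Z⟫/2 with E a symmetric positive semi-definite m×m matrix, let φ, φ* : ℝ^m → ℝ, let X, X* ∈ ℝ^m and ε > 0 with |φ(X) − φ*(X)| < ε and |φ(X*) − φ*(X*)| < ε. If P ∈ D_X(φ) and P* ∈ D_{X*}(φ*) (super-differentials relative to e), then ⟪P − P*, X − X*⟫ < 2ε + 2 e(X − X*). -/
import Mathlib


open Filter Topology RealInnerProductSpace

noncomputable section

/-- The quadratic form `Z ↦ ⟪E Z, Z⟫ / 2` associated with a linear operator `E` on `ℝ^m`. -/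
def quadForm {m : ℕ} (Eop : EuclideanSpace ℝ (Fin m) →L[ℝ] EuclideanSpace ℝ (Fin m))
    (Z : EuclideanSpace ℝ (Fin m)) : ℝ :=
  ⟪Eop Z, Z⟫ / 2

/-- The super-differential of `φ` at `X` relative to the quadratic form `e`:
`D_X(φ) = { P : φ(Y) ≤ φ(X) + ⟪P, Y − X⟫ + e(Y − X) for all Y }`. -/
def superDiff {m : ℕ} (e φ : EuclideanSpace ℝ (Fin m) → ℝ)
    (X : EuclideanSpace ℝ (Fin m)) : Set (EuclideanSpace ℝ (Fin m)) :=
  {P | ∀ Y, φ Y ≤ φ X + ⟪P, Y - X⟫ + e (Y - X)}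

/-- The Hamiltonian `h(P) = ⟪q₀, P⟫ + ⟪A P, P⟫ / 2`, the sum of a linear form and a
quadratic form. -/
def quadHam {m : ℕ} (q₀ : EuclideanSpace ℝ (Fin m))
    (A : EuclideanSpace ℝ (Fin m) →L[ℝ] EuclideanSpace ℝ (Fin m))
    (P : EuclideanSpace ℝ (Fin m)) : ℝ :=
  ⟪q₀, P⟫ + ⟪A P, P⟫ / 2

/-- `X : [0,∞) → ℝ^m` solves the gradient differential equation `X⁺(t) = ∇h(φ)(X(t))` for the
Hamiltonian `h = quadHam q₀ A`: at every `t ≥ 0` the Hamiltonian attains its minimum over the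
super-differential `D_{X(t)}(φ)`, and for every minimizer `P` the one-way derivative `X⁺(t)`
exists and equals `h'(P) = q₀ + A P`. -/
def SolvesGradODE {m : ℕ} (e φ : EuclideanSpace ℝ (Fin m) → ℝ)
    (q₀ : EuclideanSpace ℝ (Fin m))
    (A : EuclideanSpace ℝ (Fin m) →L[ℝ] EuclideanSpace ℝ (Fin m))
    (X : ℝ → EuclideanSpace ℝ (Fin m)) : Prop :=
  ∀ t, 0 ≤ t →
    (∃ P ∈ superDiff e φ (X t), ∀ P' ∈ superDiff e φ (X t),
        quadHam q₀ A P ≤ quadHam q₀ A P') ∧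
    ∀ P ∈ superDiff e φ (X t), (∀ P' ∈ superDiff e φ (X t),
        quadHam q₀ A P ≤ quadHam q₀ A P') →
      Tendsto (fun lam : ℝ => lam⁻¹ • (X (t + lam) - X t)) (𝓝[>] 0) (𝓝 (q₀ + A P))

/-- **Key monotonicity-type inequality.** Let `e(Z) = ⟪E Z, Z⟫/2` with `E` symmetric positive
semi-definite, let `φ, φ*` be two potentials which are `ε`-close at the two points `X, X*`,
and let `P ∈ D_X(φ)`, `P* ∈ D_{X*}(φ*)` be super-differentials relative to `e`. Then
`⟪P − P*, X − X*⟫ < 2ε + 2 e(X − X*)`. -/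
theorem key_monotonicity_inequality {m : ℕ}
    (Eop : EuclideanSpace ℝ (Fin m) →L[ℝ] EuclideanSpace ℝ (Fin m))
    (hE_sym : ∀ v w, ⟪Eop v, w⟫ = ⟪v, Eop w⟫) (hE_psd : ∀ v, 0 ≤ ⟪Eop v, v⟫)
    (φ φstar : EuclideanSpace ℝ (Fin m) → ℝ)
    (X Xstar : EuclideanSpace ℝ (Fin m)) (ε : ℝ) (hε : 0 < ε)
    (hclose₁ : |φ X - φstar X| < ε) (hclose₂ : |φ Xstar - φstar Xstar| < ε)
    (P Pstar : EuclideanSpace ℝ (Fin m))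
    (hP : P ∈ superDiff (quadForm Eop) φ X)
    (hPstar : Pstar ∈ superDiff (quadForm Eop) φstar Xstar) :
    ⟪P - Pstar, X - Xstar⟫ < 2 * ε + 2 * quadForm Eop (X - Xstar) := by
  have h1 := hP Xstar
  have h2 := hPstar X
  have heq : quadForm Eop (Xstar - X) = quadForm Eop (X - Xstar) := by
    have h : Xstar - X = -(X - Xstar) := by abel
    rw [quadForm, quadForm, h, map_neg, inner_neg_neg]
  have ha1 : φ X - φstar X < ε := lt_of_le_of_lt (le_abs_self _) hclose₁
  have ha2 : φstar Xstar - φ Xstar < ε := by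
    have := abs_lt.mp hclose₂
    linarith [this.1]
  have hinner : ⟪P, Xstar - X⟫ = -⟪P, X - Xstar⟫ := by
    rw [show Xstar - X = -(X - Xstar) by abel, inner_neg_right]
  rw [inner_sub_left]
  rw [heq, hinner] at h1
  linarith
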